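/- For every α > 0, one has lim_{t → ∞} C_{0,0}(t) = 1 and lim_{t → ∞} Σ_{ℓ ∈ ℤ, ℓ ≠ 0} |C_{ℓ,0}(t)| = 0; that is, the covariance matrix C(t) converges to the identity as t → ∞. -/

import Mathlib

open MeasureTheory Filter

/-- The interval `I_k = [t^α (2k-1), t^α (2k+1))`. -/
noncomputable def Ik (t α : ℝ) (k : ℤ) : Set ℝ :=
  Set.Ico (t ^ α * (2 * (k : ℝ) - 1)) (t ^ α * (2 * (k : ℝ) + 1))

/-- The covariance entry `C_{ℓ,k}(t) = (1/(2 t^α)) ∫_{I_k} ∫_{I_ℓ} Q(x - y) dx dy`. -/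
noncomputable def Cmat (Q : ℝ → ℝ) (t α : ℝ) (l k : ℤ) : ℝ :=
  (1 / (2 * t ^ α)) * ∫ y in Ik t α k, ∫ x in Ik t α l, Q (x - y)

section Aux

variable {Q : ℝ → ℝ}

lemma inner_eq (a b y : ℝ) (hab : a ≤ b) :
    ∫ x in Set.Ico a b, Q (x - y) = ∫ x in (a - y)..(b - y), Q x := by
  rw [← intervalIntegral.integral_comp_sub_right, intervalIntegral.integral_of_le hab,
    MeasureTheory.setIntegral_congr_set MeasureTheory.Ico_ae_eq_Ioc]

lemma inner_nonneg (hQnonneg : ∀ x, 0 ≤ Q x) (a b y : ℝ) :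
    0 ≤ ∫ x in Set.Ico a b, Q (x - y) :=
  setIntegral_nonneg measurableSet_Ico fun x _ => hQnonneg _

lemma inner_cont (hQint : Integrable Q) (a b : ℝ) (hab : a ≤ b) :
    Continuous fun y => ∫ x in Set.Ico a b, Q (x - y) := by
  have hH : Continuous fun u => ∫ x in (0:ℝ)..u, Q x :=
    intervalIntegral.continuous_primitive (fun a b => hQint.intervalIntegrable) 0
  have heq : (fun y => ∫ x in Set.Ico a b, Q (x - y))
      = fun y => (∫ x in (0:ℝ)..(b - y), Q x) - ∫ x in (0:ℝ)..(a - y), Q x := by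
    funext y
    rw [inner_eq a b y hab,
      intervalIntegral.integral_interval_sub_left hQint.intervalIntegrable
        hQint.intervalIntegrable]
  rw [heq]
  exact (hH.comp (continuous_const.sub continuous_id)).sub
    (hH.comp (continuous_const.sub continuous_id))

lemma Ik_disjoint {t α : ℝ} (ht : 0 < t ^ α) {i j : ℤ} (hij : i ≠ j) :
    Disjoint (Ik t α i) (Ik t α j) := by
  have key : ∀ i j : ℤ, i < j → t ^ α * (2 * (i : ℝ) + 1) ≤ t ^ α * (2 * (j : ℝ) - 1) := by
    intro i j h
    have : (i : ℝ) + 1 ≤ j := by exact_mod_cast h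
    nlinarith
  rw [Ik, Ik, Set.Ico_disjoint_Ico]
  rcases hij.lt_or_gt with h | h
  · exact le_trans (inf_le_left) (le_trans (key i j h) le_sup_right)
  · exact le_trans (inf_le_right) (le_trans (key j i h) le_sup_left)

lemma g_sum_le (hQnonneg : ∀ x, 0 ≤ Q x) (hQint : Integrable Q) (hQnorm : (∫ x, Q x) = 1)
    {t α : ℝ} (ht : 0 < t ^ α) (S : Finset ℤ) (y : ℝ) :
    ∑ l ∈ S, ∫ x in Ik t α l, Q (x - y) ≤ 1 := by
  rw [← MeasureTheory.integral_biUnion_finset S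
      (fun i _ => show MeasurableSet (Ik t α i) from measurableSet_Ico)
      (fun i _ j _ hij => Ik_disjoint ht hij) (fun i _ => (hQint.comp_sub_right y).integrableOn)]
  calc ∫ x in ⋃ i ∈ S, Ik t α i, Q (x - y)
      ≤ ∫ x, Q (x - y) := setIntegral_le_integral (hQint.comp_sub_right y)
        (Filter.Eventually.of_forall fun x => hQnonneg _)
    _ = 1 := by rw [integral_sub_right_eq_self Q y, hQnorm]

lemma Ik_le {t α : ℝ} (ht : 0 < t ^ α) (k : ℤ) :
    t ^ α * (2 * (k : ℝ) - 1) ≤ t ^ α * (2 * (k : ℝ) + 1) := by nlinarith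

lemma Cmat_nonneg (hQnonneg : ∀ x, 0 ≤ Q x) {t α : ℝ} (ht : 0 < t ^ α) (l : ℤ) :
    0 ≤ Cmat Q t α l 0 := by
  apply mul_nonneg (by positivity)
  exact setIntegral_nonneg measurableSet_Ico fun y _ => inner_nonneg hQnonneg _ _ _

lemma vol_Ik {t α : ℝ} (ht : 0 < t ^ α) (k : ℤ) :
    (volume (Ik t α k)).toReal = 2 * t ^ α := by
  rw [Ik, Real.volume_Ico, ENNReal.toReal_ofReal (by nlinarith)]
  ring

lemma sum_Cmat_le (hQnonneg : ∀ x, 0 ≤ Q x) (hQint : Integrable Q) (hQnorm : (∫ x, Q x) = 1)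
    {t α : ℝ} (ht : 0 < t ^ α) (S : Finset ℤ) :
    ∑ l ∈ S, Cmat Q t α l 0 ≤ 1 := by
  have hgint : ∀ l : ℤ, IntegrableOn (fun y => ∫ x in Ik t α l, Q (x - y)) (Ik t α 0) := by
    intro l
    exact ((inner_cont hQint _ _ (Ik_le ht l)).integrableOn_Icc).mono_set Set.Ico_subset_Icc_self
  have hsum : ∑ l ∈ S, Cmat Q t α l 0
      = (1 / (2 * t ^ α)) * ∫ y in Ik t α 0, ∑ l ∈ S, ∫ x in Ik t α l, Q (x - y) := by
    rw [MeasureTheory.integral_finset_sum S (fun l _ => hgint l), Finset.mul_sum]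
    rfl
  rw [hsum]
  have h1 : ∫ y in Ik t α 0, ∑ l ∈ S, ∫ x in Ik t α l, Q (x - y)
      ≤ ∫ y in Ik t α 0, (1:ℝ) := by
    apply setIntegral_mono_on (integrable_finset_sum S fun l _ => hgint l)
      (integrableOn_const (by rw [Ik, Real.volume_Ico]; exact ENNReal.ofReal_ne_top))
      measurableSet_Ico
    exact fun y _ => g_sum_le hQnonneg hQint hQnorm ht S y
  calc (1 / (2 * t ^ α)) * ∫ y in Ik t α 0, ∑ l ∈ S, ∫ x in Ik t α l, Q (x - y)
      ≤ (1 / (2 * t ^ α)) * ∫ y in Ik t α 0, (1:ℝ) :=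
        mul_le_mul_of_nonneg_left h1 (by positivity)
    _ = 1 := by
        rw [setIntegral_const, smul_eq_mul, mul_one, measureReal_def, vol_Ik ht 0]
        field_simp

lemma Cmat_le_one (hQnonneg : ∀ x, 0 ≤ Q x) (hQint : Integrable Q) (hQnorm : (∫ x, Q x) = 1)
    {t α : ℝ} (ht : 0 < t ^ α) : Cmat Q t α 0 0 ≤ 1 := by
  simpa using sum_Cmat_le hQnonneg hQint hQnorm ht {0}

lemma Cmat_lower (hQnonneg : ∀ x, 0 ≤ Q x) (hQint : Integrable Q)
    {t α : ℝ} (ht : 0 < t ^ α) {δ : ℝ} (hδ : 0 < δ) (hδ1 : δ ≤ 1) :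
    (1 - δ) * (∫ x in (-(δ * t ^ α))..(δ * t ^ α), Q x) ≤ Cmat Q t α 0 0 := by
  set T := t ^ α with hT
  set m := ∫ x in (-(δ * T))..(δ * T), Q x with hm
  have hmnn : 0 ≤ m := intervalIntegral.integral_nonneg (by nlinarith) fun u _ => hQnonneg u
  set J : Set ℝ := Set.Ico (-((1 - δ) * T)) ((1 - δ) * T) with hJ
  have hI0 : Ik t α 0 = Set.Ico (-T) T := by
    rw [Ik, hT]
    congr 1 <;> push_cast <;> ring
  have hJsub : J ⊆ Ik t α 0 := by
    rw [hI0]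
    exact Set.Ico_subset_Ico (by nlinarith) (by nlinarith)
  have hg0 : ∀ y ∈ J, m ≤ ∫ x in Ik t α 0, Q (x - y) := by
    intro y hy
    obtain ⟨hy1, hy2⟩ := hy
    rw [hI0, inner_eq (-T) T y (by nlinarith)]
    apply intervalIntegral.integral_mono_interval (by nlinarith) (by nlinarith) (by nlinarith)
      (Filter.Eventually.of_forall fun u => hQnonneg u) hQint.intervalIntegrable
  have hgint : IntegrableOn (fun y => ∫ x in Ik t α 0, Q (x - y)) (Ik t α 0) := by
    rw [hI0] at *
    exact ((inner_cont hQint _ _ (by nlinarith)).integrableOn_Icc).mono_set Set.Ico_subset_Icc_self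
  have step1 : 2 * ((1 - δ) * T) * m ≤ ∫ y in J, ∫ x in Ik t α 0, Q (x - y) := by
    have : ∫ y in J, m = 2 * ((1 - δ) * T) * m := by
      rw [setIntegral_const, smul_eq_mul, hJ, measureReal_def, Real.volume_Ico,
        ENNReal.toReal_ofReal (by nlinarith)]
      ring_nf
    rw [← this]
    apply setIntegral_mono_on
      (integrableOn_const (by rw [hJ, Real.volume_Ico]; exact ENNReal.ofReal_ne_top))
      (hgint.mono_set hJsub) measurableSet_Ico hg0
  have step2 : ∫ y in J, (∫ x in Ik t α 0, Q (x - y)) ≤ ∫ y in Ik t α 0, ∫ x in Ik t α 0, Q (x - y) := by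
    apply setIntegral_mono_set hgint
      (Filter.Eventually.of_forall fun y => inner_nonneg hQnonneg _ _ _)
      (HasSubset.Subset.eventuallyLE hJsub)
  have : Cmat Q t α 0 0 = (1 / (2 * T)) * ∫ y in Ik t α 0, ∫ x in Ik t α 0, Q (x - y) := rfl
  rw [this]
  have h2T : (0:ℝ) < 2 * T := by nlinarith
  calc (1 - δ) * m = (1 / (2 * T)) * (2 * ((1 - δ) * T) * m) := by field_simp
    _ ≤ (1 / (2 * T)) * ∫ y in Ik t α 0, ∫ x in Ik t α 0, Q (x - y) := by
        apply mul_le_mul_of_nonneg_left (le_trans step1 step2) (by positivity)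

end Aux

theorem stmt19 (Q : ℝ → ℝ) (hQeven : ∀ x, Q (-x) = Q x) (hQnonneg : ∀ x, 0 ≤ Q x)
    (hQmono : AntitoneOn Q (Set.Ici 0))
    (hQint : Integrable Q) (hQnorm : (∫ x, Q x) = 1)
    (c₀ θ : ℝ) (hc₀ : 0 < c₀) (hθ : 0 < θ)
    (hQdecay : ∀ x : ℝ, 1 ≤ |x| → Q x ≤ c₀ * |x| ^ (-(3 + θ)))
    (α : ℝ) (hα : 0 < α) :
    Tendsto (fun t : ℝ => Cmat Q t α 0 0) atTop (nhds 1) ∧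
    Tendsto (fun t : ℝ => ∑' l : {l : ℤ // l ≠ 0}, |Cmat Q t α l 0|) atTop (nhds 0) := by
  have hTpos : ∀ᶠ t : ℝ in atTop, 0 < t ^ α := by
    filter_upwards [eventually_ge_atTop 1] with t ht
    exact Real.rpow_pos_of_pos (by linarith) α
  have hTtop : Tendsto (fun t : ℝ => t ^ α) atTop atTop := tendsto_rpow_atTop hα
  -- Part 1
  have part1 : Tendsto (fun t : ℝ => Cmat Q t α 0 0) atTop (nhds 1) := by
    rw [tendsto_order]
    constructor
    · intro a ha
      set δ : ℝ := min ((1 - a) / 2) 1 with hδdef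
      have hδpos : 0 < δ := lt_min (by linarith) one_pos
      have hδ1 : δ ≤ 1 := min_le_right _ _
      have halt : a < (1 - δ) * 1 := by
        rcases min_cases ((1 - a) / 2) 1 with ⟨h1, h2⟩ | ⟨h1, h2⟩ <;> rw [hδdef, h1] <;> nlinarith
      have hmt : Tendsto (fun t : ℝ => (1 - δ) * ∫ x in (-(δ * t ^ α))..(δ * t ^ α), Q x)
          atTop (nhds ((1 - δ) * 1)) := by
        apply Tendsto.const_mul
        rw [← hQnorm]
        apply MeasureTheory.intervalIntegral_tendsto_integral hQint
        · exact tendsto_neg_atBot_iff.2 (hTtop.const_mul_atTop hδpos)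
        · exact hTtop.const_mul_atTop hδpos
      filter_upwards [hTpos, hmt.eventually_const_lt halt] with t ht hmlt
      exact lt_of_lt_of_le hmlt (Cmat_lower hQnonneg hQint ht hδpos hδ1)
    · intro a ha
      filter_upwards [hTpos] with t ht
      exact lt_of_le_of_lt (Cmat_le_one hQnonneg hQint hQnorm ht) ha
  refine ⟨part1, ?_⟩
  -- Part 2
  apply squeeze_zero' (Filter.Eventually.of_forall fun t => tsum_nonneg fun l => abs_nonneg _)
    (g := fun t => 1 - Cmat Q t α 0 0)
  · filter_upwards [hTpos] with t ht
    apply tsum_le_of_sum_le'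
      (by linarith [Cmat_le_one hQnonneg hQint hQnorm ht])
    intro F
    have habs : ∀ l : {l : ℤ // l ≠ 0}, |Cmat Q t α l 0| = Cmat Q t α l 0 :=
      fun l => abs_of_nonneg (Cmat_nonneg hQnonneg ht l)
    simp_rw [habs]
    have himg : ∑ l ∈ F, Cmat Q t α l 0 = ∑ l ∈ F.image Subtype.val, Cmat Q t α l 0 := by
      rw [Finset.sum_image (fun x _ y _ h => Subtype.ext h)]
    have h0 : (0:ℤ) ∉ F.image Subtype.val := by
      intro hmem
      obtain ⟨⟨l, hl⟩, -, h⟩ := Finset.mem_image.1 hmem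
      exact hl h
    have := sum_Cmat_le hQnonneg hQint hQnorm ht (insert (0:ℤ) (F.image Subtype.val))
    rw [Finset.sum_insert h0] at this
    rw [himg]
    linarith
  · have : Tendsto (fun t : ℝ => 1 - Cmat Q t α 0 0) atTop (nhds (1 - 1)) :=
      tendsto_const_nhds.sub part1
    rwa [sub_self] at this
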